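/- For every language L: there exists an advice A such that L is terminating regular with advice A if and only if there exists an advice B such that L is nonterminating regular with advice B. -/

import Mathlib

open Classical

/-- The run of a (terminating) automaton with advice. -/
def advRun {Q S Γ : Type*} (δ : Q → Γ → S → Q) (A : ℕ → Γ) : Q → ℕ → List S → Q
  | q, _, [] => q
  | q, n, a :: w => advRun δ A (δ q (A n) a) (n + 1) w

/-- The language accepted by a terminating automaton with advice. -/
def advAccepts {Q S Γ : Type*} (δ : Q → Γ → S → Q) (A : ℕ → Γ) (q0 : Q) (F : Set Q) :
    Set (List S) :=
  {w | advRun δ A q0 0 w ∈ F}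

/-- The infinite run of a nonterminating automaton with advice on a finite word
`w`: after `w` ends, the automaton reads blanks (`none`) with the advice. -/
def ntRun {Q S Γ : Type*} (δ : Q → Γ → Option S → Q) (A : ℕ → Γ) (q0 : Q)
    (w : List S) : ℕ → Q
  | 0 => q0
  | n + 1 => δ (ntRun δ A q0 w n) (A n) w[n]?

/-- The language accepted by a nonterminating automaton with advice, via the
Muller condition `F ⊆ P(Q)` on the set of infinitely visited states. -/
def ntAccepts {Q S Γ : Type*} (δ : Q → Γ → Option S → Q) (A : ℕ → Γ) (q0 : Q)
    (F : Set (Set Q)) : Set (List S) :=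
  {w | {q | {n | ntRun δ A q0 w n = q}.Infinite} ∈ F}

/-- `L` is terminating regular with advice `A`. -/
def TermRegWith {S Γ : Type*} (A : ℕ → Γ) (L : Set (List S)) : Prop :=
  ∃ (Q : Type) (_ : Fintype Q) (δ : Q → Γ → S → Q) (q0 : Q) (F : Set Q),
    advAccepts δ A q0 F = L

/-- `L` is nonterminating regular with advice `A`. -/
def NontermRegWith {S Γ : Type*} (A : ℕ → Γ) (L : Set (List S)) : Prop :=
  ∃ (Q : Type) (_ : Fintype Q) (δ : Q → Γ → Option S → Q) (q0 : Q) (F : Set (Set Q)),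
    ntAccepts δ A q0 F = L

/-!
A nonterminating automaton accepts `w` exactly when, from the state reached after `w`, the
run on blanks with the remaining advice satisfies the Muller condition: the set of infinitely
visited states does not depend on a finite prefix of the run. That condition depends only on
the current state and the position, so it can be written into the advice one position ahead
(the sets `fₙ`), and a terminating automaton that remembers the last looked-up bit accepts the
same language. Conversely, a terminating automaton that idles on blanks is eventually constant
after the word, so its only infinitely visited state is the final state.
-/

section

variable {Q S Γ : Type*}

theorem Nat.infinite_setOf_add_iff (p : ℕ → Prop) (k : ℕ) :
    {n | p (k + n)}.Infinite ↔ {n | p n}.Infinite := by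
  rw [← Nat.frequently_atTop_iff_infinite, ← Nat.frequently_atTop_iff_infinite]
  conv_rhs => rw [← Filter.map_add_atTop_eq_nat k, Filter.frequently_map]
  simp only [Nat.add_comm]

def letterStep (δ : Q → Γ → Option S → Q) : Q → Γ → S → Q :=
  fun q γ s => δ q γ (some s)

theorem ntRun_add (δ : Q → Γ → Option S → Q) (A : ℕ → Γ) (q : Q) (w : List S) (k m : ℕ) :
    ntRun δ A q w (k + m) = ntRun δ (fun i => A (k + i)) (ntRun δ A q w k) (w.drop k) m := by
  induction m with
  | zero => rfl
  | succ m ih =>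
    change δ (ntRun δ A q w (k + m)) (A (k + m)) w[k + m]? = _
    rw [ih, ← List.getElem?_drop]
    rfl

theorem ntRun_length (δ : Q → Γ → Option S → Q) (A : ℕ → Γ) (q : Q) (n : ℕ) (w : List S) :
    ntRun δ (fun i => A (n + i)) q w w.length = advRun (letterStep δ) A q n w := by
  induction w generalizing q n with
  | nil => rfl
  | cons a w ih =>
    rw [List.length_cons, Nat.add_comm, ntRun_add, List.drop_one, List.tail_cons, advRun, ← ih]
    congr 1
    funext i
    rw [Nat.add_assoc]

def AcceptsBlanksAt (δ : Q → Γ → Option S → Q) (A : ℕ → Γ) (F : Set (Set Q)) (n : ℕ) (q : Q) :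
    Prop :=
  ([] : List S) ∈ ntAccepts δ (fun i => A (n + i)) q F

theorem mem_ntAccepts_iff (δ : Q → Γ → Option S → Q) (A : ℕ → Γ) (q0 : Q) (F : Set (Set Q))
    (w : List S) :
    w ∈ ntAccepts δ A q0 F ↔ AcceptsBlanksAt δ A F w.length (advRun (letterStep δ) A q0 0 w) := by
  have hrun : ∀ m, ntRun δ A q0 w (w.length + m) =
      ntRun δ (fun i => A (w.length + i)) (advRun (letterStep δ) A q0 0 w) [] m := by
    intro m
    rw [ntRun_add, List.drop_length, ← ntRun_length δ A q0 0 w]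
    simp only [Nat.zero_add]
  have hshift (q : Q) : {n | ntRun δ A q0 w (w.length + n) = q}.Infinite ↔
      {n | ntRun δ A q0 w n = q}.Infinite :=
    Nat.infinite_setOf_add_iff (fun n => ntRun δ A q0 w n = q) w.length
  simp only [AcceptsBlanksAt, ntAccepts, Set.mem_ofPred_eq, ← hrun, hshift]

def idleOnBlank (δ : Q → Γ → S → Q) : Q → Γ → Option S → Q :=
  fun q γ o => o.elim q (δ q γ)

theorem ntRun_idleOnBlank_nil (δ : Q → Γ → S → Q) (A : ℕ → Γ) (q : Q) (m : ℕ) :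
    ntRun (idleOnBlank δ) A q [] m = q := by
  induction m with
  | zero => rfl
  | succ m ih => simp [ntRun, ih, idleOnBlank]

theorem ntAccepts_idleOnBlank (δ : Q → Γ → S → Q) (A : ℕ → Γ) (q0 : Q) (F : Set Q) :
    ntAccepts (idleOnBlank δ) A q0 ((fun q => {q}) '' F) = advAccepts δ A q0 F := by
  have hvisited (n : ℕ) (q : Q) :
      {p | {m | ntRun (idleOnBlank δ) (fun i => A (n + i)) q [] m = p}.Infinite} = {q} := by
    ext p
    by_cases hpq : p = q <;> simp [ntRun_idleOnBlank_nil, hpq, Ne.symm, Set.infinite_univ]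
  ext w
  rw [mem_ntAccepts_iff]
  simp only [AcceptsBlanksAt, ntAccepts, Set.mem_ofPred_eq, hvisited,
    Set.singleton_injective.mem_set_image]
  rfl

def lookaheadAdvice (δ : Q → Γ → Option S → Q) (B : ℕ → Γ) (F : Set (Set Q)) :
    ℕ → Γ × Set Q :=
  fun n => (B n, {q | AcceptsBlanksAt δ B F (n + 1) q})

/-- The flag carried along is whether the blank continuation from the current state accepts;
the advice supplies it one step ahead, so the flag after the last letter decides acceptance. -/
def lookaheadStep (δ : Q → Γ → Option S → Q) : Q × Prop → Γ × Set Q → S → Q × Prop :=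
  fun p g s => (δ p.1 g.1 (some s), δ p.1 g.1 (some s) ∈ g.2)

theorem advRun_lookaheadStep (δ : Q → Γ → Option S → Q) (B : ℕ → Γ) (F : Set (Set Q))
    (q : Q) (n : ℕ) (w : List S) :
    advRun (lookaheadStep δ) (lookaheadAdvice δ B F) (q, AcceptsBlanksAt δ B F n q) n w =
      (advRun (letterStep δ) B q n w,
        AcceptsBlanksAt δ B F (n + w.length) (advRun (letterStep δ) B q n w)) := by
  induction w generalizing q n with
  | nil => rfl
  | cons a w ih =>
    rw [advRun, advRun, List.length_cons, Nat.add_comm w.length 1, ← Nat.add_assoc]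
    exact ih _ (n + 1)

theorem advAccepts_lookaheadStep (δ : Q → Γ → Option S → Q) (B : ℕ → Γ) (q0 : Q)
    (F : Set (Set Q)) :
    advAccepts (lookaheadStep δ) (lookaheadAdvice δ B F) (q0, AcceptsBlanksAt δ B F 0 q0)
      {p | p.2} = ntAccepts δ B q0 F := by
  ext w
  rw [mem_ntAccepts_iff, advAccepts, Set.mem_ofPred_eq, advRun_lookaheadStep, Nat.zero_add]
  rfl

end

/-- The terminating and nonterminating models are equivalent when the advice is
not fixed. -/
theorem termReg_iff_nontermReg {S : Type*} (L : Set (List S)) :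
    (∃ (Γ : Type) (_ : Fintype Γ) (A : ℕ → Γ), TermRegWith A L) ↔
      (∃ (Γ : Type) (_ : Fintype Γ) (B : ℕ → Γ), NontermRegWith B L) := by
  constructor
  · rintro ⟨Γ, hΓ, A, Q, hQ, δ, q0, F, rfl⟩
    exact ⟨Γ, hΓ, A, Q, hQ, idleOnBlank δ, q0, _, ntAccepts_idleOnBlank δ A q0 F⟩
  · rintro ⟨Γ, _, B, Q, _, δ, q0, F, rfl⟩
    exact ⟨Γ × Set Q, inferInstance, lookaheadAdvice δ B F, Q × Prop, inferInstance,
      lookaheadStep δ, _, _, advAccepts_lookaheadStep δ B q0 F⟩
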